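/- arXiv:math/0103019 — 2 statements merged into one kernel-verified Lean document; each statement's English description precedes it below -/
import Mathlib

section
/- In a P-Frobenius algebra A with Frobenius homomorphism φ, there is a unique k-algebra automorphism ν of A (the Nakayama automorphism) satisfying φ(ab) = φ(ν(b)a) for all a, b ∈ A (equivalently aφ = φν(a) as elements of Hom_k(A,P)). -/
def IsInvertibleModule (k P : Type*) [CommRing k] [AddCommGroup P] [Module k P] : Prop :=
  Module.Finite k P ∧ Module.Projective k P ∧ Function.Bijective (contractRight k P)

/-! The pairing `(a, b) ↦ φ (a * b)` identifies `A` with `Hom_k(A, P)` through its left slot.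
Its right slot is the transpose of the left one precomposed with evaluation
`A → Hom_k(Hom_k(A, P), P)`, which is bijective because `P` is invertible and `A` is finite
projective; so the right slot identifies `A` with `Hom_k(A, P)` too. The Nakayama map
`ν := left⁻¹ ∘ right` is then characterized by `φ (ν b * a) = φ (a * b)`, and nondegeneracy of
the pairing makes it multiplicative, unital and unique. -/

open Module Function LinearMap

theorem IsInvertibleModule.invertible {k P : Type*} [CommRing k] [AddCommGroup P] [Module k P]
    (hP : IsInvertibleModule k P) : Module.Invertible k P :=
  .left (LinearEquiv.ofBijective _ hP.2.2)

namespace Module.Invertible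

variable {k P : Type*} [CommSemiring k] [AddCommMonoid P] [Module k P] [Module.Invertible k P]

variable (k P) in
theorem bijective_lsmul : Bijective (lsmul k P) :=
  toModuleEnd_bijective k P

theorem bijective_applyₗ (M : Type*) [AddCommMonoid M] [Module k M] [Module.Finite k M]
    [Projective k M] : Bijective (applyₗ : M →ₗ[k] (M →ₗ[k] P) →ₗ[k] P) := by
  -- `Hom(M, P) ≅ Mᵛ ⊗ P` and `End P ≅ k` reduce this to the reflexivity of `M`.
  let E : ((M →ₗ[k] P) →ₗ[k] P) ≃ₗ[k] Dual k (Dual k M) :=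
    (dualTensorHomEquiv k M P).symm.arrowCongr (.refl k P) ≪≫ₗ
      (TensorProduct.lift.equiv (.id k) (Dual k M) P P).symm ≪≫ₗ
      (LinearEquiv.refl k (Dual k M)).arrowCongr
        (LinearEquiv.ofBijective _ (bijective_lsmul k P)).symm
  have hE : ⇑E ∘ ⇑(applyₗ : M →ₗ[k] (M →ₗ[k] P) →ₗ[k] P) = Dual.eval k M := by
    ext m ψ
    simp [E, LinearEquiv.symm_apply_eq]
    ext p
    simp
  rw [← EquivLike.comp_bijective _ E, hE]
  exact bijective_dual_eval k M

theorem bijective_flip {M N : Type*} [AddCommMonoid M] [Module k M] [AddCommMonoid N] [Module k N]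
    [Module.Finite k N] [Projective k N] {B : M →ₗ[k] N →ₗ[k] P} (hB : Bijective B) :
    Bijective B.flip := by
  have h : ⇑B.flip = LinearEquiv.congrLeft P k (LinearEquiv.ofBijective B hB).symm ∘ applyₗ := by
    ext n m
    rfl
  rw [h, EquivLike.comp_bijective]
  exact bijective_applyₗ N

end Module.Invertible

section Nakayama

variable {k A P : Type*} [CommSemiring k] [Semiring A] [Algebra k A] [AddCommMonoid P]
  [Module k P] {φ : A →ₗ[k] P}

theorem eq_of_forall_map_mul_eq (hφ : Injective ((mul k A).compr₂ φ)) {c d : A}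
    (h : ∀ a, φ (c * a) = φ (d * a)) : c = d :=
  hφ (LinearMap.ext h)

variable (hl : Bijective ((mul k A).compr₂ φ))

noncomputable def nakayamaMap : A →ₗ[k] A :=
  (LinearEquiv.ofBijective _ hl).symm.toLinearMap ∘ₗ ((mul k A).compr₂ φ).flip

theorem map_nakayamaMap_mul (a b : A) : φ (nakayamaMap hl b * a) = φ (a * b) :=
  LinearMap.congr_fun ((LinearEquiv.ofBijective _ hl).apply_symm_apply _) a

theorem nakayamaMap_one : nakayamaMap hl 1 = 1 :=
  eq_of_forall_map_mul_eq hl.1 fun a => by rw [map_nakayamaMap_mul, mul_one, one_mul]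

theorem nakayamaMap_mul (b c : A) :
    nakayamaMap hl (b * c) = nakayamaMap hl b * nakayamaMap hl c :=
  eq_of_forall_map_mul_eq hl.1 fun a => by simp only [map_nakayamaMap_mul, mul_assoc]

theorem nakayamaMap_bijective (hr : Bijective ((mul k A).compr₂ φ).flip) :
    Bijective (nakayamaMap hl) :=
  (LinearEquiv.ofBijective _ hl).symm.bijective.comp hr

noncomputable def nakayamaAut (hr : Bijective ((mul k A).compr₂ φ).flip) : A ≃ₐ[k] A :=
  .ofBijective (.ofLinearMap (nakayamaMap hl) (nakayamaMap_one hl) (nakayamaMap_mul hl))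
    (nakayamaMap_bijective hl hr)

end Nakayama

/-- Existence and uniqueness of the Nakayama automorphism: if `φ : A → P` is a Frobenius
homomorphism for the `P`-Frobenius algebra `A` (i.e. `a ↦ φ·a = φ(a·—)` is an isomorphism
`A ≅ Hom_k(A,P)`), then there is a unique `k`-algebra automorphism `ν` of `A` with
`φ(ab) = φ(ν(b)a)` for all `a, b ∈ A`. -/
theorem nakayama_exists_unique (k A P : Type*) [CommRing k] [AddCommGroup P] [Module k P]
    [Ring A] [Algebra k A] (hP : IsInvertibleModule k P)
    (hfin : Module.Finite k A) (hproj : Module.Projective k A)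
    (φ : A →ₗ[k] P)
    (hFrob : Function.Bijective fun a : A => φ ∘ₗ LinearMap.mulLeft k a) :
    ∃! ν : A ≃ₐ[k] A, ∀ a b : A, φ (a * b) = φ (ν b * a) := by
  have := hP.invertible
  have hl : Bijective ((mul k A).compr₂ φ) := hFrob
  have hr := Module.Invertible.bijective_flip hl
  refine ⟨nakayamaAut hl hr, fun a b => (map_nakayamaMap_mul hl a b).symm, fun ν hν => ?_⟩
  ext b
  exact eq_of_forall_map_mul_eq hl.1 fun a =>
    (hν a b).symm.trans (map_nakayamaMap_mul hl a b).symm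
end

section
/- Let H be a finitely generated projective Hopf k-algebra with Frobenius homomorphism ψ and Nakayama automorphism ν, and let m := ε ∘ ν be the left modular function. Then ν(a) = S̄²(m ⇀ a) = m ⇀ S̄²(a) for all a ∈ H, where S̄ is the inverse of the antipode and m ⇀ a = Σ a₍₁₎ m(a₍₂₎). -/
open scoped TensorProduct

/-!
Write `S̄` for the inverse of the antipode `S`. The integral property of `ψ` gives
`∑ a₁ ⊗ ψ(x a₂) = ∑ S(x₁) ⊗ ψ(x₂ a)` for all `x, a`. Combined with `ψ(x a) = ψ(ν(a) x)`, it shows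
that the two tensors `∑ S̄(a₁) ⊗ ν(a₂)` and `∑ S((ν a)₁) ⊗ (ν a)₂` have the same image under
`id ⊗ ψ(- x)` for every `x`. These maps are jointly injective on `H ⊗ H` because `H` is finite and
flat and `b ↦ ψ(b -)` is injective, so the two tensors are equal. Applying `id ⊗ ε` gives
`S̄(m ⇀ a) = S(ν a)`, which is the first formula. The second holds because `S̄²` is a coalgebra
map and `m ∘ S̄² = m`: since `m` is an algebra map to a commutative ring, `m ∘ S` is both an
algebra map and the convolution inverse of `m`.
-/

section

open TensorProduct Coalgebra HopfAlgebra LinearMap WithConv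
open Algebra.TensorProduct (includeLeft includeRight)

variable {R : Type*} [CommSemiring R]

theorem Module.Flat.eq_of_forall_lTensor_flip_eq {M N Q P : Type*} [AddCommMonoid M] [Module R M]
    [AddCommMonoid N] [Module R N] [AddCommMonoid Q] [Module R Q] [AddCommMonoid P] [Module R P]
    [Module.Flat R M] [Module.Finite R N] (β : Q →ₗ[R] N →ₗ[R] P) (hβ : Function.Injective β)
    {t₁ t₂ : M ⊗[R] Q} (h : ∀ n, lTensor M (β.flip n) t₁ = lTensor M (β.flip n) t₂) : t₁ = t₂ := by
  classical
  obtain ⟨n, g, hg⟩ := Module.Finite.exists_fin (R := R) (M := N)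
  let D : Q →ₗ[R] Fin n → P := LinearMap.pi fun i => β.flip (g i)
  have hD : Function.Injective D := fun q q' hqq' =>
    hβ (ext_on_range hg fun i => congr_fun hqq' i)
  have hpi (t : M ⊗[R] Q) (i : Fin n) :
      piRight R R M (fun _ => P) (lTensor M D t) i = lTensor M (β.flip (g i)) t := by
    induction t using TensorProduct.induction_on with
    | zero => simp
    | tmul x y => simp [D]
    | add x y hx hy => simp only [map_add, Pi.add_apply, hx, hy]
  refine Module.Flat.lTensor_preserves_injective_linearMap D hD
    ((piRight R R M fun _ => P).injective (funext fun i => ?_))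
  rw [hpi, hpi, h]

lemma TensorProduct.rid_lTensor_map {M N N' C : Type*} [AddCommMonoid M] [Module R M]
    [AddCommMonoid N] [Module R N] [AddCommMonoid N'] [Module R N'] [AddCommMonoid C] [Module R C]
    (f : N →ₗ[R] R) (g : C →ₗ[R] M) (h : N' →ₗ[R] N) (t : C ⊗[R] N') :
    TensorProduct.rid R M (lTensor M f (map g h t)) =
      g (TensorProduct.rid R C (lTensor C (f ∘ₗ h) t)) := by
  induction t using TensorProduct.induction_on with
  | zero => simp
  | tmul x y => simp
  | add x y hx hy => simp only [map_add, hx, hy]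

namespace Coalgebra

variable {C : Type*} [AddCommMonoid C] [Module R C] [Coalgebra R C]

/-- The action `f ⇀ a = ∑ a₁ f(a₂)` of the dual algebra on a coalgebra. -/
def hit (f : C →ₗ[R] R) : C →ₗ[R] C :=
  (_root_.TensorProduct.rid R C).toLinearMap ∘ₗ lTensor C f ∘ₗ comul

lemma hit_counit (a : C) : hit (counit (R := R)) a = a := by
  simp [hit, lTensor_counit_comul]

lemma hit_apply_of_comul_apply {f : C →ₗ[R] R} {g : C →ₗ[R] C}
    (hg : ∀ a, comul (g a) = map g g (comul a)) (hf : ∀ a, f (g a) = f a) (a : C) :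
    hit f (g a) = g (hit f a) := by
  have hfg : f ∘ₗ g = f := LinearMap.ext hf
  simp only [hit, LinearMap.comp_apply, LinearEquiv.coe_coe, hg,
    _root_.TensorProduct.rid_lTensor_map, hfg]

end Coalgebra

lemma LinearMap.toConv_algHom_comp_mul {A B C : Type*} [Semiring A] [Algebra R A]
    [Semiring B] [Algebra R B] [AddCommMonoid C] [Module R C] [CoalgebraStruct R C]
    (h : A →ₐ[R] B) (f g : C →ₗ[R] A) :
    toConv (h.toLinearMap ∘ₗ f) * toConv (h.toLinearMap ∘ₗ g) =
      toConv (h.toLinearMap ∘ₗ (toConv f * toConv g).ofConv) :=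
  ofConv_injective (algHom_comp_convMul_distrib h (toConv f) (toConv g)).symm

lemma Bialgebra.toConv_comul_eq_includeLeft_mul_includeRight {H : Type*} [Semiring H]
    [Bialgebra R H] :
    toConv (comul (R := R) (A := H)) =
      toConv (includeLeft (R := R) (A := H) (B := H)).toLinearMap *
        toConv includeRight.toLinearMap := by
  have : mul' R (H ⊗[R] H) ∘ₗ map (includeLeft (S := R)).toLinearMap includeRight.toLinearMap =
      .id := by
    ext u v; simp
  rw [LinearMap.convMul_def, ofConv_toConv, ofConv_toConv, ← comp_assoc, this, id_comp]

namespace HopfAlgebra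

variable {H : Type*} [Semiring H] [HopfAlgebra R H]

lemma toConv_algHom_comp_antipode_mul {B : Type*} [Semiring B] [Algebra R B] (f : H →ₐ[R] B) :
    toConv (f.toLinearMap ∘ₗ antipode R) * toConv f.toLinearMap = 1 := by
  have h := toConv_algHom_comp_mul f (antipode R) .id
  rw [comp_id, antipode_mul_id] at h
  exact h.trans (by ext; simp)

lemma toConv_includeLeft_comp_antipode_mul_comul :
    toConv ((includeLeft (R := R) (A := H) (B := H)).toLinearMap ∘ₗ antipode R) * toConv comul =
      toConv includeRight.toLinearMap := by
  rw [Bialgebra.toConv_comul_eq_includeLeft_mul_includeRight, ← mul_assoc,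
    toConv_algHom_comp_antipode_mul, one_mul]

lemma toConv_map_antipode_antipode_comp_comm_comp_comul :
    toConv (map (antipode R) (antipode R) ∘ₗ (TensorProduct.comm R H H).toLinearMap ∘ₗ comul) =
      toConv ((includeRight (R := R) (A := H) (B := H)).toLinearMap ∘ₗ antipode R) *
        toConv (includeLeft.toLinearMap ∘ₗ antipode R) := by
  have : map (antipode R) (antipode R) ∘ₗ (TensorProduct.comm R H H).toLinearMap =
      mul' R (H ⊗[R] H) ∘ₗ
        map ((includeRight (R := R) (A := H) (B := H)).toLinearMap ∘ₗ antipode R)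
          (includeLeft.toLinearMap ∘ₗ antipode R) := by
    ext u v; simp
  rw [LinearMap.convMul_def, ofConv_toConv, ofConv_toConv, ← comp_assoc, this, comp_assoc]

/-- In the convolution algebra `Hom(H, H ⊗ H)`, `(S ⊗ S) ∘ τ ∘ Δ` is a left inverse of `Δ`
(write `Δ = ι₁ * ι₂`), while `Δ ∘ S` is a right inverse. -/
lemma comul_comp_antipode :
    comul ∘ₗ antipode R = map (antipode R) (antipode R) ∘ₗ
      (TensorProduct.comm R H H).toLinearMap ∘ₗ (comul (R := R) (A := H)) := by
  refine toConv_injective (left_inv_eq_right_inv ?_ comul_right_inv).symm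
  rw [toConv_map_antipode_antipode_comp_comm_comp_comul, mul_assoc,
    toConv_includeLeft_comp_antipode_mul_comul, toConv_algHom_comp_antipode_mul]

lemma comul_antipode (a : H) :
    comul (antipode R a) = map (antipode R) (antipode R) (TensorProduct.comm R H H (comul a)) :=
  congr($comul_comp_antipode a)

lemma algHom_comp_antipode_comp_antipode {B : Type*} [CommSemiring B] [Algebra R B]
    (f : H →ₐ[R] B) : f.toLinearMap ∘ₗ antipode R ∘ₗ antipode R = f.toLinearMap := by
  let g : H →ₐ[R] B := .ofLinearMap (f.toLinearMap ∘ₗ antipode R) (by simp)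
    fun x y => by simp [antipode_mul_antidistrib, mul_comm]
  exact toConv_injective (left_inv_eq_right_inv (toConv_algHom_comp_antipode_mul g)
    (toConv_algHom_comp_antipode_mul f))

section InverseAntipode

variable {e : H ≃ₗ[R] H} (he : e.toLinearMap = antipode R)
include he

lemma algHom_apply_symm_symm {B : Type*} [CommSemiring B] [Algebra R B] (f : H →ₐ[R] B) (a : H) :
    f (e.symm (e.symm a)) = f a := by
  have := congr($(algHom_comp_antipode_comp_antipode f) (e.symm (e.symm a)))
  simpa [← he] using this.symm

lemma comul_symm (a : H) :
    comul (e.symm a) =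
      map e.symm.toLinearMap e.symm.toLinearMap (TensorProduct.comm R H H (comul a)) := by
  have := comul_antipode (R := R) (e.symm a)
  rw [← he, LinearEquiv.coe_coe, e.apply_symm_apply] at this
  simp [this, map_comm, map_map]

lemma comul_symm_symm (a : H) :
    comul (e.symm (e.symm a)) = map (e.symm.toLinearMap ∘ₗ e.symm.toLinearMap)
      (e.symm.toLinearMap ∘ₗ e.symm.toLinearMap) (comul a) := by
  simp [comul_symm he, map_comm, map_map]

lemma hit_symm_symm (f : H →ₐ[R] R) (a : H) :
    hit f.toLinearMap (e.symm (e.symm a)) = e.symm (e.symm (hit f.toLinearMap a)) :=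
  hit_apply_of_comul_apply (g := e.symm.toLinearMap ∘ₗ e.symm.toLinearMap) (comul_symm_symm he)
    (algHom_apply_symm_symm he f) a

end InverseAntipode

section Frobenius

variable {P : Type*} [AddCommMonoid P] [Module R P]
  {ψ : H →ₗ[R] P} (hψ : ∀ a : H, lTensor H ψ (comul a) = 1 ⊗ₜ[R] ψ a)
include hψ

lemma tmul_eq_lTensor_tmul_one_mul_comul (u z : H) :
    u ⊗ₜ[R] ψ z = lTensor H ψ ((u ⊗ₜ[R] 1) * comul z) := by
  have h := congr(rTensor P (mulLeft R u) $(hψ z))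
  rw [rTensor_tmul, mulLeft_apply, mul_one, ← LinearMap.comp_apply, rTensor_comp_lTensor,
    ← lTensor_comp_rTensor, LinearMap.comp_apply] at h
  rw [← h, ← mulLeft_apply (R := R), mulLeft_tmul, mulLeft_one]
  rfl

/-- Both sides equal `(id ⊗ ψ)((u ⊗ v) Δa)` at `u ⊗ v = ∑ S(x₁) x₂ ⊗ x₃ = 1 ⊗ x`. -/
lemma lTensor_comp_mulLeft_comul (x a : H) :
    lTensor H (ψ ∘ₗ mulLeft R x) (comul a) = map (antipode R) (ψ ∘ₗ mulRight R a) (comul x) := by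
  let Φ : H ⊗[R] H →ₗ[R] H ⊗[R] P := lTensor H ψ ∘ₗ mulRight R (comul a)
  have hΦ : map (antipode R) (ψ ∘ₗ mulRight R a) = Φ ∘ₗ mul' R (H ⊗[R] H) ∘ₗ
      map (includeLeft.toLinearMap ∘ₗ antipode R) comul := by
    ext u v
    simp [Φ, tmul_eq_lTensor_tmul_one_mul_comul hψ, Bialgebra.comul_mul, mul_assoc]
  calc lTensor H (ψ ∘ₗ mulLeft R x) (comul a)
      = Φ (1 ⊗ₜ[R] x) := by
        have : lTensor H (mulLeft R x) = mulLeft R ((1 : H) ⊗ₜ[R] x) := by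
          rw [mulLeft_tmul, mulLeft_one]; rfl
        rw [lTensor_comp, LinearMap.comp_apply, this]
        rfl
    _ = Φ ((toConv (includeLeft.toLinearMap ∘ₗ antipode R) *
          toConv comul : WithConv (H →ₗ[R] H ⊗[R] H)) x) := by
        rw [toConv_includeLeft_comp_antipode_mul_comul]; rfl
    _ = map (antipode R) (ψ ∘ₗ mulRight R a) (comul x) := by
        rw [hΦ, LinearMap.convMul_apply]; rfl

variable [Module.Finite R H] [Module.Flat R H] {ν : H ≃ₐ[R] H}
  (hFrob : Function.Injective fun a : H => ψ ∘ₗ mulRight R a)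
  (hν : ∀ x a : H, ψ (x * a) = ψ (ν a * x))
include hFrob hν

omit hψ in
lemma eq_of_forall_lTensor_comp_mulRight_eq {t₁ t₂ : H ⊗[R] H}
    (h : ∀ x, lTensor H (ψ ∘ₗ mulRight R x) t₁ = lTensor H (ψ ∘ₗ mulRight R x) t₂) :
    t₁ = t₂ := by
  refine Module.Flat.eq_of_forall_lTensor_flip_eq ((mul R H).compr₂ ψ) (fun b c hbc => ?_) h
  refine ν.symm.injective (hFrob (LinearMap.ext fun x => ?_))
  simpa [hν x] using congr($hbc x)

variable {e : H ≃ₗ[R] H} (he : e.toLinearMap = antipode R)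
include he

lemma map_symm_nakayama_comul (a : H) :
    map e.symm.toLinearMap ν.toLinearMap (comul a) = rTensor H (antipode R) (comul (ν a)) := by
  refine eq_of_forall_lTensor_comp_mulRight_eq hFrob hν fun x => ?_
  have hνx : ψ ∘ₗ mulRight R x ∘ₗ ν.toLinearMap = ψ ∘ₗ mulLeft R x := by ext b; simp [hν x b]
  have hνa : ψ ∘ₗ mulLeft R (ν a) = ψ ∘ₗ mulRight R a := by ext y; simp [hν y a]
  have he' : e.symm.toLinearMap ∘ₗ antipode R = .id := by rw [← he]; exact e.symm_comp
  calc lTensor H (ψ ∘ₗ mulRight R x) (map e.symm.toLinearMap ν.toLinearMap (comul a))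
      = rTensor P e.symm.toLinearMap (lTensor H (ψ ∘ₗ mulLeft R x) (comul a)) := by
        rw [← LinearMap.comp_apply, lTensor_comp_map, comp_assoc, hνx, ← rTensor_comp_lTensor]
        rfl
    _ = lTensor H (ψ ∘ₗ mulRight R a) (comul x) := by
        rw [lTensor_comp_mulLeft_comul hψ, ← LinearMap.comp_apply, rTensor_comp_map, he']
        rfl
    _ = map (antipode R) (ψ ∘ₗ mulRight R x) (comul (ν a)) := by
        rw [← hνa, lTensor_comp_mulLeft_comul hψ]
    _ = lTensor H (ψ ∘ₗ mulRight R x) (rTensor H (antipode R) (comul (ν a))) := by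
        rw [← LinearMap.comp_apply (lTensor _ _), lTensor_comp_rTensor]

lemma nakayama_eq_symm_symm_hit (a : H) :
    ν a = e.symm (e.symm (hit (counit ∘ₗ ν.toLinearMap) a)) := by
  have h := congr(TensorProduct.rid R H (lTensor H counit
    $(map_symm_nakayama_comul hψ hFrob hν he a)))
  rw [rTensor, rid_lTensor_map, rid_lTensor_map, comp_id] at h
  have hS : antipode R (ν a) = e.symm (hit (counit ∘ₗ ν.toLinearMap) a) := by
    conv_lhs => rw [← hit_counit (R := R) (ν a)]
    exact h.symm
  rw [← hS, ← he, LinearEquiv.coe_coe, e.symm_apply_apply]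

end Frobenius

end HopfAlgebra

end

/-- Formula for the Nakayama automorphism of a finitely generated projective Hopf algebra:
if `ψ : H → P` is the Frobenius homomorphism (left-integral-like, i.e.
`Σ a₍₁₎ ⊗ ψ(a₍₂₎) = 1 ⊗ ψ(a)`), `ν` its Nakayama automorphism, `m = ε ∘ ν` the left
modular function and `S̄ = S⁻¹`, then `ν(a) = S̄²(m ⇀ a) = m ⇀ S̄²(a)` where
`m ⇀ a = Σ a₍₁₎ m(a₍₂₎)`. -/
theorem nakayama_formula (k H P : Type*) [CommRing k] [Ring H] [HopfAlgebra k H]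
    [Module.Finite k H] [Module.Projective k H]
    [AddCommGroup P] [Module k P]
    (ψ : H →ₗ[k] P)
    (hFrob : Function.Bijective (fun a : H => ψ ∘ₗ LinearMap.mulRight k a))
    (hint : ∀ a : H, (LinearMap.lTensor H ψ) (Coalgebra.comul (R := k) a) = 1 ⊗ₜ[k] ψ a)
    (ν : H ≃ₐ[k] H)
    (hν : ∀ x a : H, ψ (x * a) = ψ (ν a * x))
    (Sb : H → H)
    (hSb : ∀ x : H, HopfAlgebra.antipode (R := k) (Sb x) = x ∧
      Sb (HopfAlgebra.antipode (R := k) x) = x)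
    (a : H) :
    ν a = Sb (Sb ((TensorProduct.rid k H)
        ((LinearMap.lTensor H (Coalgebra.counit (R := k) ∘ₗ ν.toLinearMap))
          (Coalgebra.comul (R := k) a)))) ∧
    ν a = (TensorProduct.rid k H)
        ((LinearMap.lTensor H (Coalgebra.counit (R := k) ∘ₗ ν.toLinearMap))
          (Coalgebra.comul (R := k) (Sb (Sb a)))) := by
  have hbij : Function.Bijective (HopfAlgebra.antipode k (A := H)) :=
    ⟨fun x y hxy => by rw [← (hSb x).2, hxy, (hSb y).2], fun y => ⟨Sb y, (hSb y).1⟩⟩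
  let e : H ≃ₗ[k] H := .ofBijective (HopfAlgebra.antipode k) hbij
  have he : e.toLinearMap = HopfAlgebra.antipode k := rfl
  have hSb_eq : Sb = e.symm := funext fun x => e.injective (by simp [e, (hSb x).1])
  have hνa := HopfAlgebra.nakayama_eq_symm_symm_hit hint hFrob.injective hν he a
  subst hSb_eq
  refine ⟨hνa, ?_⟩
  rw [hνa]
  exact (HopfAlgebra.hit_symm_symm he ((Bialgebra.counitAlgHom k H).comp ν.toAlgHom) a).symm
end
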